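/- arXiv:2401.03966 — 2 statements merged into one kernel-verified Lean document; each statement's English description precedes it below -/
import Mathlib

section
/- Let α be a closed form of odd degree k ≥ 3 on M, let η be a form of degree k−1 (even) that is nilpotent with η^N = 0, and set α' = α + dη. Then for every differential form ω, d'_{α'}(e^{-η} ∧ ω) = e^{-η} ∧ d'_α(ω), where e^{-η} = Σ_j (−η)^j/j! and d'_γ(σ) = dσ + γ∧σ. Consequently d'_{α'} and d'_α are conjugate operators and induce isomorphic twisted cohomologies. -/
/-!
STATEMENT 5: Let α be a closed form of odd degree k ≥ 3 on M, let η be a form of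
degree k−1 (even) with η^N = 0, and set α' = α + dη.  Then for every form ω,
d'_{α'}(e^{-η} ∧ ω) = e^{-η} ∧ d'_α(ω), where e^{-η} = Σ_j (−η)^j/j! and
d'_γ(σ) = dσ + γ∧σ.  Consequently d'_{α'} and d'_α are conjugate operators and
induce isomorphic twisted cohomologies.

Ω•(M) is abstracted as an ℝ-algebra `A` (multiplication = wedge product) with a
homogeneity predicate `IsHomog`, exterior derivative `d`, graded Leibniz rule
and graded commutativity.
-/

/-- The (ℤ/2-graded) twisted cohomology of the twisted differential `D = d'_γ`,
i.e. ker D modulo the image of D (pulled back to the kernel). -/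
abbrev twistedCohomology {A : Type*} [Ring A] [Algebra ℝ A] (D : A →ₗ[ℝ] A) :=
  LinearMap.ker D ⧸ (LinearMap.range D).comap (LinearMap.ker D).subtype

theorem exp_conjugates_twisted_differentials
    {A : Type*} [Ring A] [Algebra ℝ A]
    (IsHomog : ℕ → A → Prop)
    (d : A →ₗ[ℝ] A)
    (d_d : ∀ ω : A, d (d ω) = 0)
    (leibniz : ∀ (p : ℕ) (ω τ : A), IsHomog p ω →
      d (ω * τ) = d ω * τ + ((-1 : ℝ) ^ p) • (ω * d τ))
    (gcomm : ∀ (p q : ℕ) (ω τ : A), IsHomog p ω → IsHomog q τ →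
      ω * τ = ((-1 : ℝ) ^ (p * q)) • (τ * ω))
    (homog_mul : ∀ (p q : ℕ) (ω τ : A), IsHomog p ω → IsHomog q τ →
      IsHomog (p + q) (ω * τ))
    (homog_d : ∀ (p : ℕ) (ω : A), IsHomog p ω → IsHomog (p + 1) (d ω))
    (homog_one : IsHomog 0 1)
    -- α is a closed form of odd degree k ≥ 3
    (k : ℕ) (hk : Odd k) (hk3 : 3 ≤ k)
    (α : A) (hα : IsHomog k α) (hαclosed : d α = 0)
    -- η is a form of (even) degree k − 1, nilpotent: η^N = 0
    (η : A) (hη : IsHomog (k - 1) η)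
    -- η, being of even degree, is central for the wedge product
    (hcentral : ∀ x : A, η * x = x * η)
    (N : ℕ) (hN : η ^ N = 0) :
    (∀ ω : A,
      d ((∑ j ∈ Finset.range N, ((j.factorial : ℝ))⁻¹ • (-η) ^ j) * ω) +
        (α + d η) * ((∑ j ∈ Finset.range N, ((j.factorial : ℝ))⁻¹ • (-η) ^ j) * ω) =
      (∑ j ∈ Finset.range N, ((j.factorial : ℝ))⁻¹ • (-η) ^ j) * (d ω + α * ω)) ∧
    Nonempty
      (twistedCohomology (d + LinearMap.mulLeft ℝ (α + d η)) ≃ₗ[ℝ]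
        twistedCohomology (d + LinearMap.mulLeft ℝ α)) := by
  classical
  obtain _ | m := N
  · -- trivial ring
    have h10 : (0 : A) = 1 := by simpa using hN.symm
    haveI : Subsingleton A := subsingleton_of_zero_eq_one h10
    haveI hsub : ∀ (D : A →ₗ[ℝ] A), Subsingleton (twistedCohomology D) := by
      intro D
      refine ⟨fun a b => ?_⟩
      refine Quotient.inductionOn₂' a b fun x y => ?_
      congr 1
      exact Subsingleton.elim x y
    haveI := hsub (d + LinearMap.mulLeft ℝ (α + d η))
    haveI := hsub (d + LinearMap.mulLeft ℝ α)
    exact ⟨fun ω => Subsingleton.elim _ _, ⟨LinearEquiv.ofSubsingleton _ _⟩⟩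
  set N := m + 1 with hNdef
  set E : A := ∑ j ∈ Finset.range N, ((j.factorial : ℝ))⁻¹ • (-η) ^ j with hEdef
  set c : ℕ → ℝ := fun j => ((j.factorial : ℝ))⁻¹ * (-1 : ℝ) ^ j with hc
  have hE' : E = ∑ j ∈ Finset.range N, c j • η ^ j := by
    rw [hEdef]
    refine Finset.sum_congr rfl fun j _ => ?_
    rw [show -η = ((-1 : ℝ)) • η by simp, smul_pow, smul_smul]
  -- d 1 = 0
  have hd1 : d (1 : A) = 0 := by
    have h := leibniz 0 1 1 homog_one
    simp only [pow_zero, one_smul, one_mul, mul_one] at h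
    exact (left_eq_add.mp h)
  -- even degree facts
  have hkev : Even (k - 1) := Nat.Odd.sub_odd hk odd_one
  have heven : ((-1 : ℝ)) ^ (k - 1) = 1 := hkev.neg_one_pow
  have hdmulη : ∀ x : A, d (η * x) = d η * x + η * d x := by
    intro x
    have h := leibniz (k - 1) η x hη
    rwa [heven, one_smul] at h
  have hcη : ∀ x : A, Commute x η := fun x => (hcentral x).symm
  -- d of powers
  have hdpow : ∀ j : ℕ, d (η ^ (j + 1)) = ((j : ℝ) + 1) • (d η * η ^ j) := by
    intro j
    induction j with
    | zero => simp [pow_one]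
    | succ n ih =>
      rw [pow_succ' η (n + 1), hdmulη, ih, mul_smul_comm]
      have hsw : η * (d η * η ^ n) = d η * η ^ (n + 1) := by
        rw [hcentral (d η * η ^ n), mul_assoc, ← pow_succ]
      rw [hsw]
      push_cast
      module
  -- homogeneity of powers and Leibniz without sign
  have hηpow : ∀ j : ℕ, IsHomog ((k - 1) * j) (η ^ j) := by
    intro j
    induction j with
    | zero => simpa using homog_one
    | succ n ih =>
      have := homog_mul (k - 1) ((k - 1) * n) η (η ^ n) hη ih
      have heq : (k - 1) + (k - 1) * n = (k - 1) * (n + 1) := by ring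
      rw [heq] at this
      rwa [pow_succ']
  have hleibpow : ∀ (j : ℕ) (x : A), d (η ^ j * x) = d (η ^ j) * x + η ^ j * d x := by
    intro j x
    have h := leibniz ((k - 1) * j) (η ^ j) x (hηpow j)
    rwa [(hkev.mul_right j).neg_one_pow, one_smul] at h
  -- d (E * ω)
  have hdEω : ∀ ω : A, d (E * ω) = d E * ω + E * d ω := by
    intro ω
    rw [hE', Finset.sum_mul, map_sum, map_sum, Finset.sum_mul, Finset.sum_mul,
      ← Finset.sum_add_distrib]
    refine Finset.sum_congr rfl fun j _ => ?_
    rw [smul_mul_assoc, map_smul, map_smul, smul_mul_assoc, smul_mul_assoc, ← smul_add,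
      hleibpow j ω]
  -- E is central
  have hEcen : ∀ x : A, E * x = x * E := by
    intro x
    rw [hE', Finset.sum_mul, Finset.mul_sum]
    refine Finset.sum_congr rfl fun j _ => ?_
    rw [smul_mul_assoc, mul_smul_comm, (hcη x).pow_right j]
  -- top power relation
  have htop : d η * η ^ m = 0 := by
    have h0 : d (η ^ (m + 1)) = 0 := by rw [hN]; exact map_zero d
    rw [hdpow m] at h0
    have : ((m : ℝ) + 1) ≠ 0 := by positivity
    exact (smul_eq_zero.mp h0).resolve_left this
  -- d E = -(d η * E)
  have hdE : d E = -(d η * E) := by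
    rw [hE', map_sum, Finset.mul_sum, ← Finset.sum_neg_distrib]
    rw [Finset.sum_range_succ' (fun j => d (c j • η ^ j)) m,
      Finset.sum_range_succ (fun j => -(d η * (c j • η ^ j))) m]
    have hlast : -(d η * (c m • η ^ m)) = 0 := by
      rw [mul_smul_comm, htop, smul_zero, neg_zero]
    rw [hlast, add_zero]
    have hzero : d (c 0 • η ^ 0) = 0 := by
      rw [pow_zero, map_smul, hd1, smul_zero]
    rw [hzero, add_zero]
    refine Finset.sum_congr rfl fun j _ => ?_
    rw [map_smul, hdpow j, smul_smul, mul_smul_comm, ← neg_smul]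
    congr 1
    rw [hc]
    simp only [Nat.factorial_succ]
    push_cast
    have hj : (j.factorial : ℝ) ≠ 0 := Nat.cast_ne_zero.mpr j.factorial_ne_zero
    have hj1 : ((j : ℝ) + 1) ≠ 0 := by positivity
    field_simp
    ring
  -- main identity
  have main : ∀ ω : A,
      d (E * ω) + (α + d η) * (E * ω) = E * (d ω + α * ω) := by
    intro ω
    rw [hdEω, hdE, add_mul, mul_add]
    have h1 : α * (E * ω) = E * (α * ω) := by
      rw [← mul_assoc, ← hEcen α, mul_assoc]
    have h2 : -(d η * E) * ω = -(d η * (E * ω)) := by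
      rw [neg_mul, mul_assoc]
    rw [h1, h2]
    abel
  refine ⟨main, ?_⟩
  -- E is a unit
  have hEunit : IsUnit E := by
    have hsplit : E = 1 + η * (∑ j ∈ Finset.range m, c (j + 1) • η ^ j) := by
      rw [hE', Finset.sum_range_succ' (fun j => c j • η ^ j) m, Finset.mul_sum]
      have h0 : c 0 • η ^ 0 = 1 := by simp [hc]
      rw [h0, add_comm]
      congr 1
      refine Finset.sum_congr rfl fun j _ => ?_
      rw [mul_smul_comm, ← pow_succ']
    have hnil : IsNilpotent (E - 1) := by
      refine ⟨m + 1, ?_⟩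
      rw [hsplit, add_sub_cancel_left, (hcη _).symm.mul_pow, hN, zero_mul]
    have := hnil.isUnit_one_add
    rwa [add_sub_cancel] at this
  obtain ⟨U, hU⟩ := hEunit
  set F : A := ↑U⁻¹ with hF
  have hEF : E * F = 1 := by rw [← hU, hF]; exact U.mul_inv
  have hFE : F * E = 1 := by rw [← hU, hF]; exact U.inv_mul
  -- the conjugating linear equivalence
  set u : A ≃ₗ[ℝ] A := LinearEquiv.ofLinear (LinearMap.mulLeft ℝ E) (LinearMap.mulLeft ℝ F)
    (by ext x; simp [← mul_assoc, hEF]) (by ext x; simp [← mul_assoc, hFE]) with hu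
  have hu_apply : ∀ x : A, u x = E * x := fun x => rfl
  have husymm_apply : ∀ x : A, u.symm x = F * x := fun x => rfl
  set D : A →ₗ[ℝ] A := d + LinearMap.mulLeft ℝ α with hD
  set D' : A →ₗ[ℝ] A := d + LinearMap.mulLeft ℝ (α + d η) with hD'
  have hkey : ∀ x : A, D' (E * x) = E * D x := by
    intro x
    have := main x
    simpa [hD, hD', LinearMap.add_apply, LinearMap.mulLeft_apply] using this
  have hkeyF : ∀ x : A, F * D' x = D (F * x) := by
    intro x
    have h := hkey (F * x)
    rw [← mul_assoc, hEF, one_mul] at h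
    calc F * D' x = F * (E * D (F * x)) := by rw [h]
    _ = (F * E) * D (F * x) := by rw [mul_assoc]
    _ = D (F * x) := by rw [hFE, one_mul]
  -- kernels correspond
  have hmapker : (LinearMap.ker D).map (u : A →ₗ[ℝ] A) = LinearMap.ker D' := by
    ext x
    simp only [Submodule.mem_map, LinearMap.mem_ker]
    constructor
    · rintro ⟨y, hy, rfl⟩
      show D' (u y) = 0
      rw [hu_apply, hkey, hy, mul_zero]
    · intro hx
      refine ⟨F * x, ?_, ?_⟩
      · rw [← hkeyF, hx, mul_zero]
      · show u (F * x) = x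
        rw [hu_apply, ← mul_assoc, hEF, one_mul]
  set f : (LinearMap.ker D) ≃ₗ[ℝ] (LinearMap.ker D') :=
    u.ofSubmodules _ _ hmapker with hfdef
  have hf_apply : ∀ z : LinearMap.ker D, (f z : A) = E * (z : A) := fun z => rfl
  have hmapsub :
      ((LinearMap.range D).comap (LinearMap.ker D).subtype).map (f : _ →ₗ[ℝ] _)
        = (LinearMap.range D').comap (LinearMap.ker D').subtype := by
    ext w
    simp only [Submodule.mem_map, Submodule.mem_comap, LinearMap.mem_range,
      Submodule.coe_subtype]
    constructor
    · rintro ⟨z, ⟨x, hx⟩, rfl⟩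
      refine ⟨E * x, ?_⟩
      rw [hkey, hx, ← hf_apply]
      rfl
    · rintro ⟨x, hx⟩
      have hw : (w : A) ∈ LinearMap.ker D' := w.2
      have hz1 : D (F * (w : A)) = 0 := by
        rw [← hkeyF, LinearMap.mem_ker.mp hw, mul_zero]
      refine ⟨⟨F * (w : A), LinearMap.mem_ker.mpr hz1⟩, ⟨F * x, ?_⟩, ?_⟩
      · show D (F * x) = F * (w : A)
        rw [← hkeyF, hx]
      · apply Subtype.ext
        show E * (F * (w : A)) = (w : A)
        rw [← mul_assoc, hEF, one_mul]
  exact ⟨(Submodule.Quotient.equiv _ _ f hmapsub).symm⟩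
end

section
/- Let A be a ring and n a positive integer. Then the Grothendieck group K₀ of the matrix ring Mₙ(A) is isomorphic to K₀(A) (Morita invariance of K₀ for matrix rings). -/
/-!
STATEMENT 16: Let A be a ring and n a positive integer.  Then the Grothendieck
group K₀ of the matrix ring Mₙ(A) is isomorphic to K₀(A) (Morita invariance of
K₀ for matrix rings).

K₀(R) is defined here as the free abelian group on (bundled) finitely generated
projective R-modules, modulo the relations [P] = [Q] for isomorphic modules and
[P ⊕ Q] = [P] + [Q].
-/

universe u

/-- A bundled finitely generated projective module over a ring `R`. -/
structure FGProj (R : Type u) [Ring R] : Type (u + 1) where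
  carrier : Type u
  [addCommGroup : AddCommGroup carrier]
  [module : Module R carrier]
  [finite : Module.Finite R carrier]
  [projective : Module.Projective R carrier]

attribute [instance] FGProj.addCommGroup FGProj.module FGProj.finite FGProj.projective

/-- The subgroup of relations defining K₀: [P] = [Q] for P ≅ Q, and
[S] = [P] + [Q] whenever S ≅ P ⊕ Q. -/
def K0Rels (R : Type u) [Ring R] : AddSubgroup (FreeAbelianGroup (FGProj R)) :=
  AddSubgroup.closure
    ({x | ∃ (P Q : FGProj R) (_ : P.carrier ≃ₗ[R] Q.carrier),
        x = FreeAbelianGroup.of P - FreeAbelianGroup.of Q} ∪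
     {x | ∃ (P Q S : FGProj R) (_ : S.carrier ≃ₗ[R] P.carrier × Q.carrier),
        x = FreeAbelianGroup.of S - FreeAbelianGroup.of P - FreeAbelianGroup.of Q})

/-- The Grothendieck group K₀ of finitely generated projective modules over R. -/
def K0 (R : Type u) [Ring R] : Type (u + 1) :=
  FreeAbelianGroup (FGProj R) ⧸ K0Rels R

instance (R : Type u) [Ring R] : AddCommGroup (K0 R) :=
  QuotientAddGroup.Quotient.addCommGroup (K0Rels R)

/-! K₀ only sees the category of modules. An equivalence of module categories preserves
isomorphisms, binary products and (categorical, hence module-theoretic) projectivity, so as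
soon as it also preserves finite generation it induces mutually inverse maps on K₀. For `Mₙ(A)`
we use the Morita equivalence `M ↦ Mⁿ`, `P ↦ e₁₁P`: here `Mⁿ` is already finite over the
scalar subring `A`, and `e₁₁P` is the image of `P`, which is finite over `A` because `Mₙ(A)`
is. -/

universe v w

open CategoryTheory Limits

namespace K0

variable {R : Type u} [Ring R]

def mk (P : FGProj R) : K0 R :=
  QuotientAddGroup.mk (s := K0Rels R) (FreeAbelianGroup.of P)

theorem mk_eq_of_linearEquiv {P Q : FGProj R} (e : P.carrier ≃ₗ[R] Q.carrier) :
    mk P = mk Q :=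
  QuotientAddGroup.eq_iff_sub_mem.2 <| AddSubgroup.subset_closure <| .inl ⟨P, Q, e, rfl⟩

theorem mk_eq_add_of_linearEquiv {P Q T : FGProj R}
    (e : T.carrier ≃ₗ[R] P.carrier × Q.carrier) : mk T = mk P + mk Q := by
  have hrel : FreeAbelianGroup.of T - FreeAbelianGroup.of P - FreeAbelianGroup.of Q ∈ K0Rels R :=
    AddSubgroup.subset_closure <| .inr ⟨P, Q, T, e, rfl⟩
  rw [← sub_eq_zero, ← sub_sub]
  exact (QuotientAddGroup.eq_zero_iff _).2 hrel

variable {G : Type*} [AddCommGroup G]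

def lift (f : FGProj R → G)
    (hiso : ∀ {P Q : FGProj R}, (P.carrier ≃ₗ[R] Q.carrier) → f P = f Q)
    (hprod : ∀ {P Q T : FGProj R}, (T.carrier ≃ₗ[R] P.carrier × Q.carrier) →
      f T = f P + f Q) :
    K0 R →+ G :=
  QuotientAddGroup.lift (K0Rels R) (FreeAbelianGroup.lift f) <| by
    rw [K0Rels, AddSubgroup.closure_le]
    rintro _ (⟨P, Q, e, rfl⟩ | ⟨P, Q, T, e, rfl⟩)
    · simp [hiso e]
    · simp [hprod e]

@[simp]
theorem lift_mk (f : FGProj R → G) (hiso) (hprod) (P : FGProj R) :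
    lift f hiso hprod (mk P) = f P :=
  FreeAbelianGroup.lift_apply_of f P

theorem hom_ext {φ ψ : K0 R →+ G} (h : ∀ P, φ (mk P) = ψ (mk P)) : φ = ψ :=
  QuotientAddGroup.addMonoidHom_ext _ <| FreeAbelianGroup.lift_ext _ _ h

end K0

noncomputable def ModuleCat.ofProdIsoProd {R : Type*} [Ring R] (M N : ModuleCat.{v} R) :
    ModuleCat.of R (M × N) ≅ M ⨯ N :=
  (ModuleCat.biprodIsoProd M N).symm ≪≫ biprod.isoProd M N

noncomputable def CategoryTheory.Functor.mapProdLinearEquiv {R S : Type*} [Ring R] [Ring S]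
    (F : ModuleCat.{v} R ⥤ ModuleCat.{w} S) (M N : ModuleCat.{v} R)
    [PreservesLimit (pair M N) F] :
    F.obj (.of R (M × N)) ≃ₗ[S] F.obj M × F.obj N :=
  (F.mapIso (ModuleCat.ofProdIsoProd M N) ≪≫ PreservesLimitPair.iso F M N ≪≫
    (ModuleCat.ofProdIsoProd _ _).symm).toLinearEquiv

section Equivalence

variable {R S : Type u} [Ring R] [Ring S] (e : ModuleCat.{u} R ≌ ModuleCat.{u} S)
  (hfin : ∀ (M : ModuleCat.{u} R) [Module.Finite R M], Module.Finite S (e.functor.obj M))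

def FGProj.mapOfEquivalence (P : FGProj R) : FGProj S where
  carrier := e.functor.obj (.of R P.carrier)
  finite := hfin _
  projective := (IsProjective.iff_projective _).2 <|
    (e.map_projective_iff _).2 <| (IsProjective.iff_projective _).1 inferInstance

noncomputable def K0.mapOfEquivalence : K0 R →+ K0 S :=
  lift (fun P => mk (FGProj.mapOfEquivalence e hfin P))
    (fun f => mk_eq_of_linearEquiv (e.functor.mapIso f.toModuleIso).toLinearEquiv)
    (fun f => mk_eq_add_of_linearEquiv <| (e.functor.mapIso f.toModuleIso).toLinearEquiv ≪≫ₗ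
      e.functor.mapProdLinearEquiv (.of R _) (.of R _))

theorem K0.mapOfEquivalence_mk (P : FGProj R) :
    mapOfEquivalence e hfin (mk P) = mk (FGProj.mapOfEquivalence e hfin P) :=
  lift_mk (G := K0 S) _ _ _ P

noncomputable def K0.congrOfEquivalence
    (hfin' : ∀ (N : ModuleCat.{u} S) [Module.Finite S N], Module.Finite R (e.inverse.obj N)) :
    K0 R ≃+ K0 S :=
  AddMonoidHom.toAddEquiv (mapOfEquivalence e hfin) (mapOfEquivalence e.symm hfin')
    (hom_ext fun P => by
      simp only [AddMonoidHom.comp_apply, mapOfEquivalence_mk, AddMonoidHom.id_apply]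
      exact mk_eq_of_linearEquiv (e.unitIso.app _).symm.toLinearEquiv)
    (hom_ext fun Q => by
      simp only [AddMonoidHom.comp_apply, mapOfEquivalence_mk, AddMonoidHom.id_apply]
      exact mk_eq_of_linearEquiv (e.counitIso.app _).toLinearEquiv)

end Equivalence

section Matrix

variable (R : Type*) {ι : Type*} [Ring R] [Fintype ι] [DecidableEq ι]

open Matrix.Module in
theorem Matrix.Module.finite_pi {M : Type*} [AddCommGroup M] [Module R M] [Module.Finite R M] :
    Module.Finite (Matrix ι ι R) (ι → M) :=
  .of_restrictScalars_finite R _ _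

theorem MatrixModCat.finite_toModuleCatObj {M : Type*} [AddCommGroup M]
    [Module (Matrix ι ι R) M] [Module R M] [IsScalarTower R (Matrix ι ι R) M]
    [Module.Finite (Matrix ι ι R) M] (i : ι) :
    Module.Finite R (MatrixModCat.toModuleCatObj R M i) :=
  have : Module.Finite R M := .trans (Matrix ι ι R) M
  Module.Finite.range _

theorem ModuleCat.finite_matrixEquivalence_functor_obj (i : ι) (M : ModuleCat R)
    [Module.Finite R M] :
    Module.Finite (Matrix ι ι R) ((ModuleCat.matrixEquivalence R i).functor.obj M) :=
  Matrix.Module.finite_pi R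

theorem ModuleCat.finite_matrixEquivalence_inverse_obj (i : ι)
    (N : ModuleCat (Matrix ι ι R)) [Module.Finite (Matrix ι ι R) N] :
    Module.Finite R ((ModuleCat.matrixEquivalence R i).inverse.obj N) :=
  -- the `R`-module structure through which `MatrixModCat.toModuleCat` acts on `N`
  letI := Module.compHom N (Matrix.scalar (α := R) ι)
  haveI := MatrixModCat.isScalarTower_toModuleCat R N
  MatrixModCat.finite_toModuleCatObj R i

end Matrix

/-- Morita invariance of K₀ for matrix rings: K₀(Mₙ(A)) ≅ K₀(A). -/
theorem K0_matrix_ring_iso (A : Type u) [Ring A] (n : ℕ) (hn : 0 < n) :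
    Nonempty (K0 (Matrix (Fin n) (Fin n) A) ≃+ K0 A) :=
  ⟨(K0.congrOfEquivalence (ModuleCat.matrixEquivalence A (⟨0, hn⟩ : Fin n))
    (ModuleCat.finite_matrixEquivalence_functor_obj A _)
    (ModuleCat.finite_matrixEquivalence_inverse_obj A _)).symm⟩
end
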